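/- (Growth bounds for linear-quadratic tilts.) Let μ be a probability measure on ℝ and d0 > 0, and suppose there exist ε ∈ (0, d0/2) and C > 0 such that for all d ∈ (d0 − ε, d0 + ε): the mean of B_{0,d}(μ) is bounded in absolute value by C, and ‖B_{t,d}(μ)‖_{ψ2} ≤ C(1 + |t|) for all t ∈ ℝ. Then: (i) there is a constant K (depending only on C, d0, ε) such that log ∫ exp(t·b − d·b²/2) dμ(b) ≤ K(1 + |t|⁴) for all t ∈ ℝ and all d ∈ (d0 − ε, d0 + ε); and (ii) for every r > 0 there is a constant K_r such that ∫ |b|^r dB_{t,d}(μ)(b) ≤ K_r(1 + |t|^{3r}) for all t ∈ ℝ and all d ∈ (d0 − ε, d0 + ε). -/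

import Mathlib

/-!
Write `Z(t, d) = lqPartition μ t d` for the normalizing constant. Part (i) is the pointwise bound
`t b - d b² / 2 ≤ t² / (2d)`. For (ii), Jensen's inequality under `B_{t,d}` gives
`s · mean B_{t,d} ≤ log Z(t + s, d) - log Z(t, d)`. At `t = 0` this and the bound on the mean of
`B_{0,d}` yield `log Z(t, d) ≥ log Z(0, d0 + ε) - C |t|`; with `s = ±1` and `Z ≤ exp (t² / (2d))`
it then bounds the mean of `B_{t,d}` by `O((1 + |t|)²)`. Finally
`|y|^r ≤ (rK)^r (e^{y/K} + e^{-y/K})` turns the sub-Gaussian bound with `K = C (1 + |t|)` into a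
bound on the centred moments, so the `r`-th moment of `B_{t,d}` is `O((1 + |t|)^{2r})`.
-/

open MeasureTheory ProbabilityTheory Real Filter

noncomputable section

/-- `SubGaussianNormLE ρ K` : the MGF of `ρ` around its mean is bounded by `exp (K² t²/2)`;
equivalently, the sub-Gaussian norm of a random variable with law `ρ` is at most `K`. -/
def SubGaussianNormLE (ρ : Measure ℝ) (K : ℝ) : Prop :=
  ∀ t : ℝ, ∫ x, Real.exp (t * (x - ∫ y, y ∂ρ)) ∂ρ ≤ Real.exp (K ^ 2 * t ^ 2 / 2)

/-- The linear-quadratic tilt `B_{t,d}(μ)`: probability measure with density w.r.t. `μ`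
proportional to `b ↦ exp (t b − d b²/2)`. -/
def tiltLQ (μ : Measure ℝ) (t d : ℝ) : Measure ℝ :=
  ((μ.withDensity fun b => ENNReal.ofReal (Real.exp (t * b - d * b ^ 2 / 2))) Set.univ)⁻¹ •
    μ.withDensity fun b => ENNReal.ofReal (Real.exp (t * b - d * b ^ 2 / 2))

def lqPartition (μ : Measure ℝ) (t d : ℝ) : ℝ := ∫ b, exp (t * b - d * b ^ 2 / 2) ∂μ

section LinearQuadraticTilt

variable {μ : Measure ℝ} {d : ℝ}

lemma lq_exponent_le (t b : ℝ) (hd : 0 < d) : t * b - d * b ^ 2 / 2 ≤ t ^ 2 / (2 * d) := by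
  rw [le_div_iff₀ (by positivity)]
  nlinarith [sq_nonneg (t - d * b)]

lemma integrable_exp_lq [IsFiniteMeasure μ] (t : ℝ) (hd : 0 < d) :
    Integrable (fun b => exp (t * b - d * b ^ 2 / 2)) μ := by
  refine (integrable_const (exp (t ^ 2 / (2 * d)))).mono' (by fun_prop) (ae_of_all _ fun b => ?_)
  rw [norm_of_nonneg (exp_pos _).le]
  exact exp_le_exp.mpr (lq_exponent_le t b hd)

lemma lqPartition_pos [IsFiniteMeasure μ] [NeZero μ] (t : ℝ) (hd : 0 < d) :
    0 < lqPartition μ t d :=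
  integral_exp_pos (integrable_exp_lq t hd)

lemma lqPartition_le [IsProbabilityMeasure μ] (t : ℝ) (hd : 0 < d) :
    lqPartition μ t d ≤ exp (t ^ 2 / (2 * d)) := by
  calc lqPartition μ t d ≤ ∫ _, exp (t ^ 2 / (2 * d)) ∂μ :=
        integral_mono (integrable_exp_lq t hd) (integrable_const _)
          fun b => exp_le_exp.mpr (lq_exponent_le t b hd)
    _ = exp (t ^ 2 / (2 * d)) := by simp

lemma log_lqPartition_le [IsProbabilityMeasure μ] (t : ℝ) (hd : 0 < d) :
    log (lqPartition μ t d) ≤ t ^ 2 / (2 * d) :=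
  (log_le_iff_le_exp (lqPartition_pos t hd)).mpr (lqPartition_le t hd)

lemma lqPartition_anti [IsFiniteMeasure μ] (t : ℝ) {d' : ℝ} (hd : 0 < d) (hdd' : d ≤ d') :
    lqPartition μ t d' ≤ lqPartition μ t d :=
  integral_mono (integrable_exp_lq t (hd.trans_le hdd')) (integrable_exp_lq t hd)
    fun b => exp_le_exp.mpr (by nlinarith [sq_nonneg b])

lemma tiltLQ_eq_tilted [IsFiniteMeasure μ] [NeZero μ] (t : ℝ) (hd : 0 < d) :
    tiltLQ μ t d = μ.tilted fun b => t * b - d * b ^ 2 / 2 := by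
  have hZ : 0 < ∫ b, exp (t * b - d * b ^ 2 / 2) ∂μ := lqPartition_pos t hd
  rw [tiltLQ, withDensity_apply _ MeasurableSet.univ, setLIntegral_univ,
    ← ofReal_integral_eq_lintegral_ofReal (integrable_exp_lq t hd)
      (ae_of_all _ fun _ => (exp_pos _).le),
    Measure.tilted, ← withDensity_smul _ (by fun_prop)]
  congr 1
  ext b
  rw [Pi.smul_apply, smul_eq_mul, ENNReal.ofReal_div_of_pos hZ, ENNReal.div_eq_inv_mul]

lemma isProbabilityMeasure_tiltLQ [IsFiniteMeasure μ] [NeZero μ] (t : ℝ) (hd : 0 < d) :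
    IsProbabilityMeasure (tiltLQ μ t d) := by
  rw [tiltLQ_eq_tilted t hd]
  exact isProbabilityMeasure_tilted (integrable_exp_lq t hd)

lemma integral_exp_mul_tiltLQ [IsFiniteMeasure μ] [NeZero μ] (t s : ℝ) (hd : 0 < d) :
    ∫ x, exp (s * x) ∂tiltLQ μ t d = lqPartition μ (t + s) d / lqPartition μ t d := by
  rw [tiltLQ_eq_tilted t hd, integral_exp_tilted, lqPartition, lqPartition]
  congr 2 with b
  simp only [Pi.add_apply]
  ring_nf

lemma integrable_exp_mul_tiltLQ [IsFiniteMeasure μ] [NeZero μ] (t s : ℝ) (hd : 0 < d) :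
    Integrable (fun x => exp (s * x)) (tiltLQ μ t d) := by
  rw [tiltLQ_eq_tilted t hd, integrable_tilted_iff (integrable_exp_lq t hd)]
  convert integrable_exp_lq (μ := μ) (t + s) hd using 2 with b
  rw [smul_eq_mul, ← exp_add]
  ring_nf

end LinearQuadraticTilt

lemma Real.add_rpow_le_two_rpow_mul_rpow_add_rpow {a b p : ℝ} (ha : 0 ≤ a) (hb : 0 ≤ b)
    (hp : 0 ≤ p) : (a + b) ^ p ≤ 2 ^ p * (a ^ p + b ^ p) := by
  calc (a + b) ^ p ≤ (2 * max a b) ^ p := by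
        gcongr
        rw [two_mul]
        exact add_le_add (le_max_left a b) (le_max_right a b)
    _ = 2 ^ p * max a b ^ p := mul_rpow zero_le_two (ha.trans (le_max_left a b))
    _ ≤ 2 ^ p * (a ^ p + b ^ p) := by
        gcongr
        rcases le_total a b with h | h
        · rw [max_eq_right h]; linarith [rpow_nonneg ha p]
        · rw [max_eq_left h]; linarith [rpow_nonneg hb p]

lemma rpow_le_rpow_mul_exp {r u : ℝ} (hr : 0 < r) (hu : 0 ≤ u) : u ^ r ≤ r ^ r * exp u := by
  have h : u / r ≤ exp (u / r) := (le_add_of_nonneg_right zero_le_one).trans (add_one_le_exp _)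
  calc u ^ r = r ^ r * (u / r) ^ r := by
        rw [div_rpow hu hr.le, mul_div_cancel₀ _ (rpow_pos_of_pos hr r).ne']
    _ ≤ r ^ r * exp (u / r) ^ r := by gcongr
    _ = r ^ r * exp u := by rw [← exp_mul, div_mul_cancel₀ _ hr.ne']

lemma abs_rpow_le_exp_add_exp {r K : ℝ} (hr : 0 < r) (hK : 0 < K) (y : ℝ) :
    |y| ^ r ≤ (r * K) ^ r * (exp (K⁻¹ * y) + exp (-K⁻¹ * y)) := by
  have hexp : exp (K⁻¹ * |y|) ≤ exp (K⁻¹ * y) + exp (-K⁻¹ * y) := by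
    rcases abs_cases y with ⟨hy, _⟩ | ⟨hy, _⟩ <;> rw [hy]
    · linarith [exp_pos (-K⁻¹ * y)]
    · rw [mul_neg, ← neg_mul]; linarith [exp_pos (K⁻¹ * y)]
  calc |y| ^ r = K ^ r * (K⁻¹ * |y|) ^ r := by
        rw [← mul_rpow hK.le (by positivity), mul_inv_cancel_left₀ hK.ne']
    _ ≤ K ^ r * (r ^ r * exp (K⁻¹ * |y|)) := by
        gcongr
        exact rpow_le_rpow_mul_exp hr (by positivity)
    _ = (r * K) ^ r * exp (K⁻¹ * |y|) := by rw [mul_rpow hr.le hK.le]; ring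
    _ ≤ (r * K) ^ r * (exp (K⁻¹ * y) + exp (-K⁻¹ * y)) := by gcongr

section ExponentialMoments

variable {ν : Measure ℝ}

lemma integrable_exp_mul_sub (hexp : ∀ s, Integrable (fun x => exp (s * x)) ν) (s m : ℝ) :
    Integrable (fun x => exp (s * (x - m))) ν :=
  ((hexp s).const_mul (exp (-(s * m)))).congr
    (ae_of_all _ fun x => by simp only [← exp_add]; ring_nf)

lemma integrable_abs_sub_rpow (hexp : ∀ s, Integrable (fun x => exp (s * x)) ν) (m : ℝ)
    {r : ℝ} (hr : 0 < r) : Integrable (fun x => |x - m| ^ r) ν := by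
  refine (((integrable_exp_mul_sub hexp 1 m).add (integrable_exp_mul_sub hexp (-1) m)).const_mul
    ((r * 1) ^ r)).mono' (by fun_prop (disch := exact hr.le)) (ae_of_all _ fun x => ?_)
  rw [norm_of_nonneg (by positivity)]
  simpa using abs_rpow_le_exp_add_exp hr one_pos (x - m)

lemma exp_mul_integral_le_integral_exp_mul [IsProbabilityMeasure ν]
    (hexp : ∀ s, Integrable (fun x => exp (s * x)) ν) (s : ℝ) :
    exp (s * ∫ x, x ∂ν) ≤ ∫ x, exp (s * x) ∂ν := by
  have habs : Integrable (fun x => |x|) ν := by simpa using integrable_abs_sub_rpow hexp 0 one_pos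
  have hid : Integrable (fun x => x) ν :=
    habs.mono' aestronglyMeasurable_id (ae_of_all _ fun x => (norm_eq_abs x).le)
  rw [← integral_const_mul]
  exact convexOn_exp.map_integral_le continuous_exp.continuousOn isClosed_univ
    (ae_of_all _ fun _ => Set.mem_univ _) (hid.const_mul s) (hexp s)

lemma integral_abs_sub_integral_rpow_le [IsProbabilityMeasure ν]
    (hexp : ∀ s, Integrable (fun x => exp (s * x)) ν) {r K : ℝ} (hr : 0 < r) (hK : 0 < K)
    (hν : SubGaussianNormLE ν K) :
    ∫ x, |x - ∫ y, y ∂ν| ^ r ∂ν ≤ 2 * exp (1 / 2) * (r * K) ^ r := by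
  set m := ∫ y, y ∂ν
  have hmgf : ∀ s, s = K⁻¹ ∨ s = -K⁻¹ → ∫ x, exp (s * (x - m)) ∂ν ≤ exp (1 / 2) := by
    rintro s hs
    refine (hν s).trans_eq (congrArg exp ?_)
    rcases hs with rfl | rfl <;> field_simp
  calc ∫ x, |x - m| ^ r ∂ν
      ≤ ∫ x, (r * K) ^ r * (exp (K⁻¹ * (x - m)) + exp (-K⁻¹ * (x - m))) ∂ν :=
        integral_mono (integrable_abs_sub_rpow hexp m hr)
          (((integrable_exp_mul_sub hexp _ m).add (integrable_exp_mul_sub hexp _ m)).const_mul _)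
          fun x => abs_rpow_le_exp_add_exp hr hK (x - m)
    _ = (r * K) ^ r * (∫ x, exp (K⁻¹ * (x - m)) ∂ν + ∫ x, exp (-K⁻¹ * (x - m)) ∂ν) := by
        rw [integral_const_mul, integral_add (integrable_exp_mul_sub hexp _ m)
          (integrable_exp_mul_sub hexp _ m)]
    _ ≤ (r * K) ^ r * (exp (1 / 2) + exp (1 / 2)) := by
        gcongr
        exacts [hmgf _ (Or.inl rfl), hmgf _ (Or.inr rfl)]
    _ = 2 * exp (1 / 2) * (r * K) ^ r := by ring

lemma integral_abs_rpow_le [IsProbabilityMeasure ν]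
    (hexp : ∀ s, Integrable (fun x => exp (s * x)) ν) {r K M : ℝ} (hr : 0 < r) (hK : 0 < K)
    (hν : SubGaussianNormLE ν K) (hM : |∫ y, y ∂ν| ≤ M) :
    ∫ x, |x| ^ r ∂ν ≤ 2 ^ r * (M ^ r + 2 * exp (1 / 2) * (r * K) ^ r) := by
  set m := ∫ y, y ∂ν
  have hpt : ∀ x, |x| ^ r ≤ 2 ^ r * (|m| ^ r + |x - m| ^ r) := fun x =>
    (rpow_le_rpow (abs_nonneg x) (by simpa using abs_add_le m (x - m)) hr.le).trans
      (Real.add_rpow_le_two_rpow_mul_rpow_add_rpow (abs_nonneg _) (abs_nonneg _) hr.le)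
  calc ∫ x, |x| ^ r ∂ν ≤ ∫ x, 2 ^ r * (|m| ^ r + |x - m| ^ r) ∂ν :=
        integral_mono (by simpa using integrable_abs_sub_rpow hexp 0 hr)
          (((integrable_const _).add (integrable_abs_sub_rpow hexp m hr)).const_mul _) hpt
    _ = 2 ^ r * (|m| ^ r + ∫ x, |x - m| ^ r ∂ν) := by
        rw [integral_const_mul, integral_add (integrable_const _)
          (integrable_abs_sub_rpow hexp m hr), integral_const, probReal_univ, one_smul]
    _ ≤ 2 ^ r * (M ^ r + 2 * exp (1 / 2) * (r * K) ^ r) := by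
        gcongr
        exact integral_abs_sub_integral_rpow_le hexp hr hK hν

end ExponentialMoments

section TiltMean

variable {μ : Measure ℝ} {d : ℝ}

lemma mul_integral_tiltLQ_le_log_sub [IsFiniteMeasure μ] [NeZero μ] (t s : ℝ) (hd : 0 < d) :
    s * ∫ x, x ∂tiltLQ μ t d ≤ log (lqPartition μ (t + s) d) - log (lqPartition μ t d) := by
  have := isProbabilityMeasure_tiltLQ (μ := μ) t hd
  rw [← log_div (lqPartition_pos _ hd).ne' (lqPartition_pos _ hd).ne',
    ← integral_exp_mul_tiltLQ t s hd, le_log_iff_exp_le (integral_exp_pos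
      (integrable_exp_mul_tiltLQ t s hd))]
  exact exp_mul_integral_le_integral_exp_mul (fun s => integrable_exp_mul_tiltLQ t s hd) s

lemma abs_integral_tiltLQ_le [IsProbabilityMeasure μ] (t : ℝ) (hd : 0 < d) :
    |∫ x, x ∂tiltLQ μ t d| ≤ (1 + |t|) ^ 2 / (2 * d) - log (lqPartition μ t d) := by
  have hsq : ∀ s, s = 1 ∨ s = -1 → (t + s) ^ 2 / (2 * d) ≤ (1 + |t|) ^ 2 / (2 * d) := by
    rintro s hs
    refine div_le_div_of_nonneg_right ?_ (by positivity)
    rcases hs with rfl | rfl <;> nlinarith [sq_abs t, le_abs_self t, neg_abs_le t]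
  have hup := mul_integral_tiltLQ_le_log_sub (μ := μ) t 1 hd
  have hdown := mul_integral_tiltLQ_le_log_sub (μ := μ) t (-1) hd
  have hZup := log_lqPartition_le (μ := μ) (t + 1) hd
  have hZdown := log_lqPartition_le (μ := μ) (t + -1) hd
  rw [abs_le]
  constructor <;> linarith [hsq 1 (Or.inl rfl), hsq (-1) (Or.inr rfl)]

lemma abs_integral_tiltLQ_le_of_abs_integral_tiltLQ_zero_le [IsProbabilityMeasure μ]
    {d' C : ℝ} (hd : 0 < d) (hdd' : d ≤ d') (hC : |∫ x, x ∂tiltLQ μ 0 d| ≤ C) (t : ℝ) :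
    |∫ x, x ∂tiltLQ μ t d| ≤ (1 + |t|) ^ 2 / (2 * d) + C * |t| - log (lqPartition μ 0 d') := by
  have hZ := mul_integral_tiltLQ_le_log_sub (μ := μ) 0 t hd
  rw [zero_add] at hZ
  have hmono : log (lqPartition μ 0 d') ≤ log (lqPartition μ 0 d) :=
    log_le_log (lqPartition_pos 0 (hd.trans_le hdd')) (lqPartition_anti 0 hd hdd')
  have hdrift : -(C * |t|) ≤ t * ∫ x, x ∂tiltLQ μ 0 d := by
    have h := mul_le_mul_of_nonneg_left hC (abs_nonneg t)
    rw [← abs_mul] at h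
    linarith [neg_abs_le (t * ∫ x, x ∂tiltLQ μ 0 d)]
  linarith [abs_integral_tiltLQ_le (μ := μ) t hd]

lemma exists_abs_integral_tiltLQ_le [IsProbabilityMeasure μ] {a b C : ℝ} (ha : 0 < a)
    (hmean : ∀ d ∈ Set.Ioo a b, |∫ x, x ∂tiltLQ μ 0 d| ≤ C) :
    ∃ B, 0 < B ∧ ∀ t, ∀ d ∈ Set.Ioo a b, |∫ x, x ∂tiltLQ μ t d| ≤ B * (1 + |t|) ^ 2 := by
  refine ⟨(2 * a)⁻¹ + |C| + |log (lqPartition μ 0 b)|, by positivity, fun t d hd => ?_⟩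
  have hd' : 0 < d := ha.trans hd.1
  have h := abs_integral_tiltLQ_le_of_abs_integral_tiltLQ_zero_le hd' hd.2.le (hmean d hd) t
  have hquad : (1 + |t|) ^ 2 / (2 * d) ≤ (2 * a)⁻¹ * (1 + |t|) ^ 2 := by
    rw [inv_mul_eq_div]
    gcongr
    exact hd.1.le
  have h1 : 1 ≤ (1 + |t|) ^ 2 := by nlinarith [abs_nonneg t]
  have h2 : |t| ≤ (1 + |t|) ^ 2 := by nlinarith [abs_nonneg t]
  linarith [neg_abs_le (log (lqPartition μ 0 b)),
    mul_le_mul_of_nonneg_left h1 (abs_nonneg (log (lqPartition μ 0 b))),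
    mul_le_mul_of_nonneg_left h2 (abs_nonneg C),
    mul_le_mul_of_nonneg_right (le_abs_self C) (abs_nonneg t)]

lemma integral_abs_rpow_tiltLQ_le [IsFiniteMeasure μ] [NeZero μ] {t B C r : ℝ} (hd : 0 < d)
    (hB : 0 ≤ B) (hC : 0 < C) (hr : 0 < r) (hmean : |∫ x, x ∂tiltLQ μ t d| ≤ B * (1 + |t|) ^ 2)
    (hsub : SubGaussianNormLE (tiltLQ μ t d) (C * (1 + |t|))) :
    ∫ x, |x| ^ r ∂tiltLQ μ t d ≤
      2 ^ r * (B ^ r + 2 * exp (1 / 2) * (r * C) ^ r) * (1 + |t|) ^ (2 * r) := by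
  have := isProbabilityMeasure_tiltLQ (μ := μ) t hd
  have hK : r * (C * (1 + |t|)) ≤ r * C * (1 + |t|) ^ 2 := by
    rw [← mul_assoc]
    gcongr
    nlinarith [abs_nonneg t]
  calc ∫ x, |x| ^ r ∂tiltLQ μ t d
      ≤ 2 ^ r * ((B * (1 + |t|) ^ 2) ^ r + 2 * exp (1 / 2) * (r * (C * (1 + |t|))) ^ r) :=
        integral_abs_rpow_le (fun s => integrable_exp_mul_tiltLQ t s hd) hr (by positivity)
          hsub hmean
    _ ≤ 2 ^ r * ((B * (1 + |t|) ^ 2) ^ r + 2 * exp (1 / 2) * (r * C * (1 + |t|) ^ 2) ^ r) := by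
        gcongr
    _ = 2 ^ r * (B ^ r + 2 * exp (1 / 2) * (r * C) ^ r) * (1 + |t|) ^ (2 * r) := by
        rw [mul_rpow hB (by positivity), mul_rpow (by positivity) (by positivity),
          ← rpow_natCast, ← rpow_mul (by positivity)]
        push_cast
        ring

end TiltMean

theorem stmt_8_general (μ : Measure ℝ) (hμ : IsProbabilityMeasure μ)
    (d0 eps C : ℝ) (heps : 0 < eps) (hepsle : eps < d0 / 2) (hC : 0 < C)
    (hmean : ∀ d ∈ Set.Ioo (d0 - eps) (d0 + eps), |∫ b, b ∂(tiltLQ μ 0 d)| ≤ C)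
    (hsub : ∀ d ∈ Set.Ioo (d0 - eps) (d0 + eps), ∀ t : ℝ,
      SubGaussianNormLE (tiltLQ μ t d) (C * (1 + |t|))) :
    (∃ K : ℝ, 0 < K ∧ ∀ t : ℝ, ∀ d ∈ Set.Ioo (d0 - eps) (d0 + eps),
      Real.log (∫ b, Real.exp (t * b - d * b ^ 2 / 2) ∂μ) ≤ K * (1 + |t| ^ (4 : ℕ))) ∧
    (∀ r : ℝ, 0 < r → ∃ Kr : ℝ, 0 < Kr ∧ ∀ t : ℝ, ∀ d ∈ Set.Ioo (d0 - eps) (d0 + eps),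
      ∫ b, |b| ^ r ∂(tiltLQ μ t d) ≤ Kr * (1 + |t| ^ (3 * r))) := by
  have hlow : 0 < d0 - eps := by linarith
  refine ⟨⟨(2 * (d0 - eps))⁻¹, by positivity, fun t d hd => ?_⟩, fun r hr => ?_⟩
  · calc log (lqPartition μ t d) ≤ t ^ 2 / (2 * d) := log_lqPartition_le t (hlow.trans hd.1)
      _ ≤ t ^ 2 / (2 * (d0 - eps)) := by gcongr; exact hd.1.le
      _ ≤ (2 * (d0 - eps))⁻¹ * (1 + |t| ^ 4) := by
          rw [inv_mul_eq_div]
          gcongr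
          nlinarith [sq_abs t, sq_nonneg (t ^ 2 - 1)]
  obtain ⟨B, hB, hmean'⟩ := exists_abs_integral_tiltLQ_le hlow hmean
  set D := 2 ^ r * (B ^ r + 2 * exp (1 / 2) * (r * C) ^ r)
  refine ⟨D * 2 ^ (3 * r), by positivity, fun t d hd => ?_⟩
  have hu : 1 ≤ 1 + |t| := le_add_of_nonneg_right (abs_nonneg t)
  calc ∫ b, |b| ^ r ∂tiltLQ μ t d ≤ D * (1 + |t|) ^ (2 * r) :=
        integral_abs_rpow_tiltLQ_le (hlow.trans hd.1) hB.le hC hr (hmean' t d hd) (hsub d hd t)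
    _ ≤ D * (1 + |t|) ^ (3 * r) := by gcongr; norm_num
    _ ≤ D * (2 ^ (3 * r) * (1 + |t| ^ (3 * r))) := by
        gcongr
        simpa using Real.add_rpow_le_two_rpow_mul_rpow_add_rpow zero_le_one (abs_nonneg t)
          (by positivity : 0 ≤ 3 * r)
    _ = D * 2 ^ (3 * r) * (1 + |t| ^ (3 * r)) := by ring

/-- **Growth bounds for linear-quadratic tilts.**
If the tilts of `μ` have uniformly bounded means at `t = 0` and sub-Gaussian norms growing
at most linearly in `t`, for `d` in a neighborhood of `d0`, then (i) the log-normalizing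
constant grows at most like `|t|⁴`; and (ii) all absolute moments of `B_{t,d}(μ)` of order
`r` grow at most like `|t|^{3r}`. -/
theorem stmt_8 (μ : Measure ℝ) (hμ : IsProbabilityMeasure μ)
    (d0 eps C : ℝ) (hd0 : 0 < d0) (heps : 0 < eps) (hepsle : eps < d0 / 2) (hC : 0 < C)
    (hmean : ∀ d ∈ Set.Ioo (d0 - eps) (d0 + eps), |∫ b, b ∂(tiltLQ μ 0 d)| ≤ C)
    (hsub : ∀ d ∈ Set.Ioo (d0 - eps) (d0 + eps), ∀ t : ℝ,
      SubGaussianNormLE (tiltLQ μ t d) (C * (1 + |t|))) :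
    (∃ K : ℝ, 0 < K ∧ ∀ t : ℝ, ∀ d ∈ Set.Ioo (d0 - eps) (d0 + eps),
      Real.log (∫ b, Real.exp (t * b - d * b ^ 2 / 2) ∂μ) ≤ K * (1 + |t| ^ (4 : ℕ))) ∧
    (∀ r : ℝ, 0 < r → ∃ Kr : ℝ, 0 < Kr ∧ ∀ t : ℝ, ∀ d ∈ Set.Ioo (d0 - eps) (d0 + eps),
      ∫ b, |b| ^ r ∂(tiltLQ μ t d) ≤ Kr * (1 + |t| ^ (3 * r))) :=
  stmt_8_general μ hμ d0 eps C heps hepsle hC hmean hsub
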